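/- arXiv:1608.08578 — 4 statements merged into one kernel-verified Lean document; each statement's English description precedes it below -/
import Mathlib

section
/- Let R be a binary relation on a finite set and let v_1, ..., v_m be a sequence of elements such that R is irreflexive on consecutive pairs in the sense that not both R(v_i, v_{i+1}) and R(v_{i+1}, v_i) hold (R arising from reachability in an acyclic graph). If for all 1 ≤ i < j < m it holds that ¬R(v_{i+1}, v_i) or ¬R(v_j, v_{j+1}), then there exists 1 ≤ h ≤ m such that ¬R(v_{i+1}, v_i) for all 1 ≤ i < h and ¬R(v_i, v_{i+1}) for all h ≤ i < m. -/
/-- Proposition 1 of the paper, abstracted to relations. -/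
theorem stmt2 {V : Type*} [Fintype V] (R : V → V → Prop)
    (m : ℕ) (hm : 1 ≤ m) (v : ℕ → V)
    (hirr : ∀ i, i + 1 < m → ¬(R (v i) (v (i + 1)) ∧ R (v (i + 1)) (v i)))
    (hcond : ∀ i j, i < j → j + 1 < m →
      ¬ R (v (i + 1)) (v i) ∨ ¬ R (v j) (v (j + 1))) :
    ∃ h, h < m ∧ (∀ i, i < h → ¬ R (v (i + 1)) (v i)) ∧
      (∀ i, h ≤ i → i + 1 < m → ¬ R (v i) (v (i + 1))) := by
  classical
  have hP : ∃ h, ∀ i, h ≤ i → i + 1 < m → ¬ R (v i) (v (i + 1)) := by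
    refine ⟨m - 1, fun i hi h1 => ?_⟩
    omega
  set h := Nat.find hP with hh
  have htail := Nat.find_spec hP
  have hle : h ≤ m - 1 := Nat.find_le (by intro i hi h1; omega)
  refine ⟨h, by omega, ?_, htail⟩
  intro i hi hR
  have hpos : 0 < h := by omega
  have := Nat.find_min hP (m := h - 1) (by omega)
  push_neg at this
  obtain ⟨j, hj, hj1, hRj⟩ := this
  rcases lt_or_eq_of_le (show i ≤ j by omega) with hlt | heq
  · rcases hcond i j hlt hj1 with h1 | h2 <;> [exact h1 hR; exact h2 hRj]
  · subst heq; exact hirr i hj1 ⟨hRj, hR⟩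
end

section
/- Let G be a finite directed acyclic graph, u a vertex, and S(u) = {v_1, ..., v_m} an ordered list of successors of u. Suppose there exist indices i < j < m such that there is a directed path from v_{i+1} to v_i and a directed path from v_j to v_{j+1} in G. Then there is no injective labeling π : V → ℕ with π(x) < π(y) for every edge (x,y) such that the sequence π(v_1), ..., π(v_m) is bitonic increasing. -/
/-- A forbidden configuration (paths v_{i+1} ⤳ v_i and v_j ⤳ v_{j+1}
with i < j among the successors of u) obstructs the existence of a topological
labeling that is bitonic increasing on the successor list. -/
theorem stmt5 {V : Type*} [Fintype V] (E : V → V → Prop)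
    (hacyc : ∀ x, ¬ Relation.TransGen E x x)
    (u : V) (m : ℕ) (v : ℕ → V) (hsucc : ∀ i, i < m → E u (v i))
    (i j : ℕ) (hij : i < j) (hjm : j + 1 < m)
    (p1 : Relation.TransGen E (v (i + 1)) (v i))
    (p2 : Relation.TransGen E (v j) (v (j + 1))) :
    ¬ ∃ π : V → ℕ, Function.Injective π ∧ (∀ x y, E x y → π x < π y) ∧
      ∃ h, h < m ∧ (∀ k, k < h → π (v k) < π (v (k + 1))) ∧
        (∀ k, h ≤ k → k + 1 < m → π (v (k + 1)) < π (v k)) := by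
  rintro ⟨π, hinj, hmono, h, hhm, hinc, hdec⟩
  have key : ∀ {a b : V}, Relation.TransGen E a b → π a < π b := by
    intro a b hab
    induction hab with
    | single e => exact hmono _ _ e
    | tail _ e ih => exact ih.trans (hmono _ _ e)
  have h1 : π (v (i + 1)) < π (v i) := key p1
  have h2 : π (v j) < π (v (j + 1)) := key p2
  have hhi : h ≤ i := by
    by_contra hc
    exact absurd (hinc i (lt_of_not_ge hc)) (not_lt.mpr h1.le)
  have := hdec j (hhi.trans hij.le) hjm
  exact absurd h2 (not_lt.mpr this.le)
end

section
/- Let G be a finite DAG and let π be a topological ordering of G (injective, increasing along edges). For each k, let G_k be the subgraph induced by the vertices with label at most k. If G has a unique source s (vertex with no incoming edges) reachable to all vertices, then G_k is connected (as an undirected graph) for every k ≥ 1. -/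
/-- In a finite DAG with a unique source s reaching every vertex
and a topological ordering π with labels 1, ..., |V|, every prefix subgraph
G_k (induced on the vertices with label at most k ≥ 1) is connected as an
undirected graph. -/
theorem stmt14 {V : Type*} [Fintype V] (E : V → V → Prop)
    (hacyc : ∀ x, ¬ Relation.TransGen E x x)
    (π : V → ℕ) (hinj : Function.Injective π)
    (hmono : ∀ u v, E u v → π u < π v)
    (hrange : ∀ v, 1 ≤ π v ∧ π v ≤ Fintype.card V)
    (s : V) (hs_src : ∀ w, ¬ E w s)
    (hs_unique : ∀ x, (∀ w, ¬ E w x) → x = s)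
    (hreach : ∀ v, Relation.ReflTransGen E s v) :
    ∀ k, 1 ≤ k →
      (SimpleGraph.fromRel (fun x y : {v : V // π v ≤ k} => E x.1 y.1)).Connected := by
  intro k hk
  classical
  have hmin : ∀ v, π s ≤ π v := by
    intro v
    induction hreach v with
    | refl => exact le_refl _
    | tail _ e ih => exact ih.trans (hmono _ _ e).le
  have hs1 : π s = 1 := by
    have hsub : Finset.univ.image π ⊆ Finset.Icc 1 (Fintype.card V) := by
      intro n hn
      obtain ⟨v, _, rfl⟩ := Finset.mem_image.mp hn
      exact Finset.mem_Icc.mpr (hrange v)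
    have hcard : (Finset.univ.image π).card = Fintype.card V := by
      rw [Finset.card_image_of_injective _ hinj, Finset.card_univ]
    have heq : Finset.univ.image π = Finset.Icc 1 (Fintype.card V) :=
      Finset.eq_of_subset_of_card_le hsub (by simp [hcard, Nat.card_Icc])
    have h1 : (1 : ℕ) ∈ Finset.univ.image π := by
      rw [heq]
      exact Finset.mem_Icc.mpr ⟨le_refl _, Fintype.card_pos_iff.mpr ⟨s⟩⟩
    obtain ⟨v, _, hv⟩ := Finset.mem_image.mp h1
    have h2 := hmin v
    have h3 := (hrange s).1
    omega
  have hsk : π s ≤ k := hs1 ▸ hk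
  set G := SimpleGraph.fromRel (fun x y : {v : V // π v ≤ k} => E x.1 y.1) with hG
  have key : ∀ n (x : {v : V // π v ≤ k}), π x.1 = n → G.Reachable x ⟨s, hsk⟩ := by
    intro n
    induction n using Nat.strong_induction_on with
    | _ n ih =>
      intro x hx
      by_cases hxs : x.1 = s
      · have hxe : x = ⟨s, hsk⟩ := Subtype.ext hxs
        rw [hxe]
      · have hw : ∃ w, E w x.1 := by
          by_contra h
          push_neg at h
          exact hxs (hs_unique x.1 h)
        obtain ⟨w, hwE⟩ := hw
        have hwlt : π w < π x.1 := hmono _ _ hwE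
        have hwk : π w ≤ k := le_of_lt (lt_of_lt_of_le hwlt x.2)
        have hadj : G.Adj x ⟨w, hwk⟩ := by
          rw [hG, SimpleGraph.fromRel_adj]
          exact ⟨fun h => absurd hwlt (by rw [h]; exact lt_irrefl _), Or.inr hwE⟩
        exact hadj.reachable.trans (ih (π w) (hx ▸ hwlt) ⟨w, hwk⟩ rfl)
  haveI : Nonempty {v : V // π v ≤ k} := ⟨⟨s, hsk⟩⟩
  exact SimpleGraph.Connected.mk (fun x y => (key _ x rfl).trans (key _ y rfl).symm)
end

section
/- Let G be a finite DAG with a single sink t (every vertex reaches t), and let π be a topological ordering. For each k < |V|, the subgraph induced by vertices with label greater than k is connected as an undirected graph. -/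
/-- In a finite DAG with a single sink t reachable from every
vertex and a topological ordering π with labels 1, ..., |V|, for every
k < |V| the subgraph induced on the vertices with label greater than k is
connected as an undirected graph. -/
theorem stmt15 {V : Type*} [Fintype V] (E : V → V → Prop)
    (hacyc : ∀ x, ¬ Relation.TransGen E x x)
    (π : V → ℕ) (hinj : Function.Injective π)
    (hmono : ∀ u v, E u v → π u < π v)
    (hrange : ∀ v, 1 ≤ π v ∧ π v ≤ Fintype.card V)
    (t : V) (ht_sink : ∀ w, ¬ E t w)
    (ht_unique : ∀ x, (∀ w, ¬ E x w) → x = t)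
    (hreach : ∀ v, Relation.ReflTransGen E v t) :
    ∀ k, k < Fintype.card V →
      (SimpleGraph.fromRel (fun x y : {v : V // k < π v} => E x.1 y.1)).Connected := by
  intro k hk
  -- t has the maximal label
  have htop : ∀ v, π v ≤ π t := by
    intro v
    have h := hreach v
    induction h using Relation.ReflTransGen.head_induction_on with
    | refl => exact le_rfl
    | head hab _ ih => exact le_of_lt (lt_of_lt_of_le (hmono _ _ hab) ih)
  -- some vertex has label card V
  have hone : 1 ≤ Fintype.card V := by omega
  have hsurj : ∃ v, π v = Fintype.card V := by
    let f : V → Finset.Icc 1 (Fintype.card V) :=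
      fun v => ⟨π v, by simp [Finset.mem_Icc, (hrange v).1, (hrange v).2]⟩
    have hfinj : Function.Injective f := by
      intro a b hab
      exact hinj (congrArg Subtype.val hab)
    have hcard : Fintype.card (Finset.Icc 1 (Fintype.card V)) = Fintype.card V := by
      simp [Nat.card_Icc]
    have hbij : Function.Bijective f :=
      (Fintype.bijective_iff_injective_and_card f).2 ⟨hfinj, hcard.symm⟩
    obtain ⟨v, hv⟩ := hbij.2 ⟨Fintype.card V, by simp [Finset.mem_Icc, hone]⟩
    exact ⟨v, congrArg Subtype.val hv⟩
  have htmax : π t = Fintype.card V := by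
    obtain ⟨v, hv⟩ := hsurj
    have h1 := htop v
    have h2 := (hrange t).2
    omega
  have htk : k < π t := by omega
  set G := SimpleGraph.fromRel (fun x y : {v : V // k < π v} => E x.1 y.1) with hG
  have key : ∀ n (v : {v : V // k < π v}), Fintype.card V - π v.1 ≤ n →
      G.Reachable v ⟨t, htk⟩ := by
    intro n
    induction n with
    | zero =>
      intro v hv
      have h2 := (hrange v.1).2
      have : π v.1 = π t := by omega
      have hvt : v = (⟨t, htk⟩ : {v : V // k < π v}) := Subtype.ext (hinj this)
      rw [hvt]
    | succ n ih =>
      intro v hv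
      by_cases hvt : v.1 = t
      · rw [show v = (⟨t, htk⟩ : {v : V // k < π v}) from Subtype.ext hvt]
      · have hex : ∃ w, E v.1 w := by
          by_contra h
          push_neg at h
          exact hvt (ht_unique _ h)
        obtain ⟨w, hw⟩ := hex
        have hπ : π v.1 < π w := hmono _ _ hw
        have hwk : k < π w := lt_trans v.2 hπ
        have hadj : G.Adj v ⟨w, hwk⟩ := by
          refine ⟨?_, Or.inl hw⟩
          intro h
          have : π v.1 = π w := congrArg (fun x => π x.1) h
          omega
        have hle : Fintype.card V - π w ≤ n := by
          have := (hrange w).2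
          omega
        exact hadj.reachable.trans (ih ⟨w, hwk⟩ hle)
  rw [SimpleGraph.connected_iff]
  refine ⟨fun u v => ?_, ⟨⟨t, htk⟩⟩⟩
  exact (key _ u le_rfl).trans (key _ v le_rfl).symm
end
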